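/- arXiv:2112.13033 — 3 statements merged into one kernel-verified Lean document; each statement's English description precedes it below -/
import Mathlib

section
/- For α ∈ (1,2) and any real x, ∫₀^∞ (1 − cos(xy))/y^α dy = |x|^{α−1} · Γ(2−α) · sin(πα/2)/(α−1). -/
open MeasureTheory Real Set
open Filter

lemma int_exp_one_sub_cos {t : ℝ} (ht : 0 < t) :
    IntegrableOn (fun y : ℝ => Real.exp (-(t * y)) * (1 - Real.cos y)) (Ioi 0) := by
  have h2 : IntegrableOn (fun y : ℝ => 2 * Real.exp (-t * y)) (Ioi 0) :=
    (exp_neg_integrableOn_Ioi 0 ht).const_mul 2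
  refine Integrable.mono h2 ?_ ?_
  · exact (Continuous.mul (by continuity) (by continuity)).aestronglyMeasurable
  · filter_upwards with y
    have h1 : Real.exp (-(t * y)) * (1 - Real.cos y) ≤ 2 * Real.exp (-t * y) := by
      rw [neg_mul]
      nlinarith [Real.exp_pos (-(t*y)), Real.neg_one_le_cos y, Real.cos_le_one y]
    have h0 : 0 ≤ Real.exp (-(t * y)) * (1 - Real.cos y) := by
      have := Real.cos_le_one y
      have := Real.exp_pos (-(t*y))
      nlinarith
    rw [Real.norm_eq_abs, Real.norm_eq_abs, abs_of_nonneg h0]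
    calc Real.exp (-(t * y)) * (1 - Real.cos y) ≤ 2 * Real.exp (-t * y) := h1
      _ ≤ |2 * Real.exp (-t * y)| := le_abs_self _

lemma laplace_one_sub_cos {t : ℝ} (ht : 0 < t) :
    ∫ y in Ioi (0:ℝ), Real.exp (-(t * y)) * (1 - Real.cos y)
      = 1 / t - t / (1 + t ^ 2) := by
  set F : ℝ → ℝ := fun y =>
    -Real.exp (-(t * y)) / t - Real.exp (-(t * y)) * (-t * Real.cos y + Real.sin y) / (1 + t ^ 2)
    with hF
  have ht2 : (0:ℝ) < 1 + t ^ 2 := by positivity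
  have hderiv : ∀ y ∈ Ici (0:ℝ),
      HasDerivAt F (Real.exp (-(t * y)) * (1 - Real.cos y)) y := by
    intro y _
    have he : HasDerivAt (fun y => Real.exp (-(t * y))) (-t * Real.exp (-(t * y))) y := by
      have := (Real.hasDerivAt_exp (-(t * y))).comp y (((hasDerivAt_id y).const_mul t).neg)
      exact this.congr_deriv (by ring)
    have hc : HasDerivAt (fun y => -t * Real.cos y + Real.sin y)
        (-t * (-Real.sin y) + Real.cos y) y :=
      ((Real.hasDerivAt_cos y).const_mul (-t)).add (Real.hasDerivAt_sin y)
    have h1 : HasDerivAt (fun y => -Real.exp (-(t * y)) / t)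
        (Real.exp (-(t * y))) y := by
      have := (he.neg).div_const t
      refine this.congr_deriv ?_
      field_simp
    have h2 : HasDerivAt (fun y => Real.exp (-(t * y)) * (-t * Real.cos y + Real.sin y) / (1 + t ^ 2))
        (Real.exp (-(t * y)) * Real.cos y) y := by
      have := (he.mul hc).div_const (1 + t ^ 2)
      refine this.congr_deriv ?_
      field_simp
      ring
    have hd := h1.sub h2
    refine hd.congr_deriv ?_
    ring
  have htend : Tendsto F atTop (nhds 0) := by
    have hb : ∀ y : ℝ, 0 ≤ y → ‖F y‖ ≤ (1 / t + (t + 1) / (1 + t ^ 2)) * Real.exp (-(t * y)) := by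
      intro y hy
      have hep : (0:ℝ) < Real.exp (-(t * y)) := Real.exp_pos _
      have habs : |(-t * Real.cos y + Real.sin y)| ≤ t + 1 := by
        calc |(-t * Real.cos y + Real.sin y)| ≤ |(-t * Real.cos y)| + |Real.sin y| := abs_add_le _ _
        _ ≤ t + 1 := by
            rw [abs_mul, abs_neg, abs_of_pos ht]
            have := Real.abs_cos_le_one y
            have := Real.abs_sin_le_one y
            nlinarith
      rw [Real.norm_eq_abs, hF]
      calc |(-Real.exp (-(t * y)) / t - Real.exp (-(t * y)) * (-t * Real.cos y + Real.sin y) / (1 + t ^ 2))|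
          ≤ |(-Real.exp (-(t * y)) / t)| + |(Real.exp (-(t * y)) * (-t * Real.cos y + Real.sin y) / (1 + t ^ 2))| := abs_sub _ _
        _ ≤ Real.exp (-(t * y)) / t + Real.exp (-(t * y)) * (t + 1) / (1 + t ^ 2) := by
            rw [abs_div, abs_div, abs_neg, abs_of_pos hep, abs_of_pos ht, abs_of_pos ht2, abs_mul,
              abs_of_pos hep]
            gcongr
        _ = (1 / t + (t + 1) / (1 + t ^ 2)) * Real.exp (-(t * y)) := by ring
    have h0' : Tendsto (fun y : ℝ => Real.exp (-(t * y))) atTop (nhds 0) := by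
      have h1 : Tendsto (fun y : ℝ => t * y) atTop atTop := tendsto_id.const_mul_atTop ht
      have := Real.tendsto_exp_neg_atTop_nhds_zero.comp h1
      exact this
    have hexp : Tendsto (fun y : ℝ => (1 / t + (t + 1) / (1 + t ^ 2)) * Real.exp (-(t * y)))
        atTop (nhds 0) := by
      simpa using h0'.const_mul (1 / t + (t + 1) / (1 + t ^ 2))
    refine squeeze_zero_norm' ?_ hexp
    filter_upwards [eventually_ge_atTop (0:ℝ)] with y hy using hb y hy
  have := integral_Ioi_of_hasDerivAt_of_tendsto' hderiv (int_exp_one_sub_cos ht) htend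
  rw [this, hF]
  simp only [mul_zero, neg_zero, Real.exp_zero, Real.cos_zero, Real.sin_zero]
  field_simp
  ring

lemma rpow_two_eq (t : ℝ) (ht : t ∈ Ioi (0:ℝ)) : t ^ ((2:ℕ):ℝ) = t ^ 2 := by
  rw [Real.rpow_natCast]

lemma exp_split (u t : ℝ) :
    Real.exp (-(1 + t ^ 2) * u) = Real.exp (-u) * Real.exp (-u * t ^ 2) := by
  rw [← Real.exp_add]; congr 1; ring

lemma J_aux (α : ℝ) (hα : 1 < α) (hα2 : α < 2) :
    (∫ t in Ioi (0:ℝ), t ^ (α - 2) / (1 + t ^ 2))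
      = Real.Gamma ((α - 1) / 2) * (1 / 2) * Real.Gamma ((3 - α) / 2)
  ∧ IntegrableOn (fun t : ℝ => t ^ (α - 2) / (1 + t ^ 2)) (Ioi 0) := by
  have hq : (-1:ℝ) < α - 2 := by linarith
  set μ := volume.restrict (Ioi (0:ℝ)) with hμ
  set h : ℝ × ℝ → ℝ := fun p => p.2 ^ (α - 2) * Real.exp (-(1 + p.2 ^ 2) * p.1) with hh
  have hmeas : AEStronglyMeasurable h (μ.prod μ) := by
    apply Measurable.aestronglyMeasurable
    fun_prop
  -- inner integral over t for fixed u > 0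
  have hint_t : ∀ u : ℝ, 0 < u →
      (∫ t in Ioi (0:ℝ), h (u, t))
        = Real.Gamma ((α - 1) / 2) * (1 / 2) * (Real.exp (-u) * u ^ ((3 - α) / 2 - 1)) := by
    intro u hu
    have h1 : ∀ t ∈ Ioi (0:ℝ), h (u, t)
        = Real.exp (-u) * (t ^ (α - 2) * Real.exp (-u * t ^ ((2:ℕ):ℝ))) := by
      intro t ht
      rw [rpow_two_eq t ht, hh]
      simp only
      rw [exp_split]
      ring
    rw [setIntegral_congr_fun measurableSet_Ioi h1, integral_const_mul,
      integral_rpow_mul_exp_neg_mul_rpow (by norm_num) hq hu]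
    have e1 : (-(α - 2 + 1) / ((2:ℕ):ℝ)) = (3 - α) / 2 - 1 := by
      push_cast; ring
    have e2 : ((α - 2 + 1) / ((2:ℕ):ℝ)) = (α - 1) / 2 := by push_cast; ring
    rw [e1, e2]
    ring
  -- inner integral over u for fixed t > 0
  have hint_u : ∀ t : ℝ, 0 < t →
      (∫ u in Ioi (0:ℝ), h (u, t)) = t ^ (α - 2) / (1 + t ^ 2) := by
    intro t ht
    have ht2 : (0:ℝ) < 1 + t ^ 2 := by positivity
    have h1 : ∀ u ∈ Ioi (0:ℝ), h (u, t)
        = t ^ (α - 2) * (u ^ ((1:ℝ) - 1) * Real.exp (-((1 + t ^ 2) * u))) := by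
      intro u hu
      rw [hh]; simp only
      rw [sub_self, Real.rpow_zero, one_mul, neg_mul]
    rw [setIntegral_congr_fun measurableSet_Ioi h1, integral_const_mul,
      integral_rpow_mul_exp_neg_mul_Ioi one_pos ht2]
    rw [Real.Gamma_one, Real.rpow_one]
    field_simp
  -- integrability on the product
  have hInt : Integrable h (μ.prod μ) := by
    rw [integrable_prod_iff hmeas]
    constructor
    · filter_upwards [ae_restrict_mem measurableSet_Ioi] with u hu
      have hu : (0:ℝ) < u := hu
      have base : IntegrableOn (fun t : ℝ => t ^ (α - 2) * Real.exp (-u * t ^ ((2:ℕ):ℝ)))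
          (Ioi 0) := integrableOn_rpow_mul_exp_neg_mul_rpow hq (by norm_num) hu
      have h2 : IntegrableOn (fun t : ℝ => Real.exp (-u) *
          (t ^ (α - 2) * Real.exp (-u * t ^ ((2:ℕ):ℝ)))) (Ioi 0) := base.const_mul _
      refine Integrable.congr h2 ?_
      filter_upwards [ae_restrict_mem measurableSet_Ioi] with t ht
      rw [rpow_two_eq t ht, hh]
      simp only
      rw [exp_split]
      ring
    · have base : IntegrableOn (fun u : ℝ => Real.exp (-u) * u ^ ((3 - α) / 2 - 1)) (Ioi 0) :=
        Real.GammaIntegral_convergent (by linarith)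
      have base2 : IntegrableOn (fun u : ℝ => Real.Gamma ((α - 1) / 2) * (1 / 2) *
          (Real.exp (-u) * u ^ ((3 - α) / 2 - 1))) (Ioi 0) := base.const_mul _
      refine Integrable.congr base2 ?_
      filter_upwards [ae_restrict_mem measurableSet_Ioi] with u hu
      have hu : (0:ℝ) < u := hu
      rw [← hint_t u hu]
      refine integral_congr_ae ?_
      filter_upwards [ae_restrict_mem measurableSet_Ioi] with t ht
      have ht : (0:ℝ) < t := ht
      rw [Real.norm_eq_abs, abs_of_nonneg]
      rw [hh]; simp only
      positivity
  -- Fubini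
  have hswap : (∫ u, ∫ t, h (u, t) ∂μ ∂μ) = ∫ t, ∫ u, h (u, t) ∂μ ∂μ :=
    integral_integral_swap hInt
  have hL : (∫ u, ∫ t, h (u, t) ∂μ ∂μ)
      = Real.Gamma ((α - 1) / 2) * (1 / 2) * Real.Gamma ((3 - α) / 2) := by
    rw [show (∫ u, ∫ t, h (u, t) ∂μ ∂μ)
        = ∫ u in Ioi (0:ℝ), Real.Gamma ((α - 1) / 2) * (1 / 2) *
          (Real.exp (-u) * u ^ ((3 - α) / 2 - 1)) from
      setIntegral_congr_fun measurableSet_Ioi (fun u hu => hint_t u hu)]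
    rw [integral_const_mul, ← Real.Gamma_eq_integral (by linarith : (0:ℝ) < (3 - α) / 2)]
  have hR : (∫ t, ∫ u, h (u, t) ∂μ ∂μ)
      = ∫ t in Ioi (0:ℝ), t ^ (α - 2) / (1 + t ^ 2) :=
    setIntegral_congr_fun measurableSet_Ioi (fun t ht => hint_u t ht)
  constructor
  · rw [← hR, ← hswap, hL]
  · have h3 := hInt.integral_prod_right
    refine Integrable.congr h3 ?_
    filter_upwards [ae_restrict_mem measurableSet_Ioi] with t ht
    exact hint_u t ht

-- main Fubini
lemma I_eval (α : ℝ) (hα : 1 < α) (hα2 : α < 2) :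
    Real.Gamma α * ∫ y in Ioi (0:ℝ), (1 - Real.cos y) / y ^ α
      = Real.Gamma ((α - 1) / 2) * (1 / 2) * Real.Gamma ((3 - α) / 2) := by
  have hα0 : (0:ℝ) < α := by linarith
  set μ := volume.restrict (Ioi (0:ℝ)) with hμ
  set f : ℝ × ℝ → ℝ :=
    fun p => p.1 ^ (α - 1) * Real.exp (-(p.1 * p.2)) * (1 - Real.cos p.2) with hf
  have hmeas : AEStronglyMeasurable f (μ.prod μ) := by
    apply Measurable.aestronglyMeasurable
    fun_prop
  have hnonneg : ∀ t : ℝ, 0 < t → ∀ y : ℝ, 0 ≤ f (t, y) := by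
    intro t ht y
    have h1 := Real.cos_le_one y
    have h2 := Real.exp_pos (-(t * y))
    have h3 : (0:ℝ) ≤ t ^ (α - 1) := Real.rpow_nonneg ht.le _
    have h4 : (0:ℝ) ≤ 1 - Real.cos y := by linarith
    simp only [hf]
    exact mul_nonneg (mul_nonneg h3 h2.le) h4
  -- inner integral over y for fixed t > 0
  have hint_y : ∀ t : ℝ, 0 < t →
      (∫ y in Ioi (0:ℝ), f (t, y)) = t ^ (α - 2) / (1 + t ^ 2) := by
    intro t ht
    have h1 : ∀ y ∈ Ioi (0:ℝ), f (t, y)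
        = t ^ (α - 1) * (Real.exp (-(t * y)) * (1 - Real.cos y)) := by
      intro y _
      simp only [hf]; ring
    rw [setIntegral_congr_fun measurableSet_Ioi h1, integral_const_mul,
      laplace_one_sub_cos ht]
    have e1 : t ^ (α - 1) = t ^ (α - 2) * t := by
      rw [← Real.rpow_add_one (ne_of_gt ht)]; congr 1; ring
    rw [e1]
    have ht2 : (0:ℝ) < 1 + t ^ 2 := by positivity
    field_simp
    ring
  -- inner integral over t for fixed y > 0
  have hint_t : ∀ y : ℝ, 0 < y →
      (∫ t in Ioi (0:ℝ), f (t, y))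
        = Real.Gamma α * ((1 - Real.cos y) / y ^ α) := by
    intro y hy
    have h1 : ∀ t ∈ Ioi (0:ℝ), f (t, y)
        = (t ^ (α - 1) * Real.exp (-(y * t))) * (1 - Real.cos y) := by
      intro t _
      simp only [hf]; ring_nf
    rw [setIntegral_congr_fun measurableSet_Ioi h1, integral_mul_const,
      integral_rpow_mul_exp_neg_mul_Ioi hα0 hy]
    rw [one_div, ← Real.rpow_neg_one y, ← Real.rpow_mul hy.le]
    have hyα : (0:ℝ) < y ^ α := Real.rpow_pos_of_pos hy _
    rw [show (-1:ℝ) * α = -α by ring, Real.rpow_neg hy.le]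
    field_simp
  -- integrability on the product
  have hInt : Integrable f (μ.prod μ) := by
    rw [integrable_prod_iff hmeas]
    constructor
    · filter_upwards [ae_restrict_mem measurableSet_Ioi] with t ht
      have ht : (0:ℝ) < t := ht
      have base := (int_exp_one_sub_cos ht).const_mul (t ^ (α - 1))
      refine Integrable.congr base ?_
      filter_upwards with y
      simp only [hf]; ring
    · have base := (J_aux α hα hα2).2
      refine Integrable.congr base ?_
      filter_upwards [ae_restrict_mem measurableSet_Ioi] with t ht
      have ht : (0:ℝ) < t := ht
      rw [← hint_y t ht]
      refine integral_congr_ae ?_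
      filter_upwards [ae_restrict_mem measurableSet_Ioi] with y hy
      rw [Real.norm_eq_abs, abs_of_nonneg (hnonneg t ht y)]
  have hswap : (∫ t, ∫ y, f (t, y) ∂μ ∂μ) = ∫ y, ∫ t, f (t, y) ∂μ ∂μ :=
    integral_integral_swap hInt
  have hL : (∫ t, ∫ y, f (t, y) ∂μ ∂μ)
      = Real.Gamma ((α - 1) / 2) * (1 / 2) * Real.Gamma ((3 - α) / 2) := by
    rw [setIntegral_congr_fun measurableSet_Ioi (fun t ht => hint_y t ht)]
    exact (J_aux α hα hα2).1
  have hR : (∫ y, ∫ t, f (t, y) ∂μ ∂μ)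
      = Real.Gamma α * ∫ y in Ioi (0:ℝ), (1 - Real.cos y) / y ^ α := by
    rw [setIntegral_congr_fun measurableSet_Ioi (fun y hy => hint_t y hy),
      integral_const_mul]
  rw [← hR, ← hswap, hL]

set_option maxHeartbeats 1000000 in
lemma alg_eval (α : ℝ) (hα : 1 < α) (hα2 : α < 2) :
    Real.Gamma ((α - 1) / 2) * (1 / 2) * Real.Gamma ((3 - α) / 2) / Real.Gamma α
      = Real.Gamma (2 - α) * Real.sin (π * α / 2) / (α - 1) := by
  have hπ := Real.pi_pos
  have hs1 : 0 < Real.sin (π * ((α - 1) / 2)) := by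
    apply Real.sin_pos_of_pos_of_lt_pi
    · exact mul_pos hπ (by linarith)
    · calc π * ((α - 1) / 2) < π * 1 := mul_lt_mul_of_pos_left (by linarith) hπ
        _ = π := mul_one π
  have hs2 : 0 < Real.sin (π * α / 2) := by
    apply Real.sin_pos_of_pos_of_lt_pi
    · exact div_pos (mul_pos hπ (by linarith)) two_pos
    · calc π * α / 2 = π * (α / 2) := by ring
        _ < π * 1 := mul_lt_mul_of_pos_left (by linarith) hπ
        _ = π := mul_one π
  have hG1 : 0 < Real.Gamma (α - 1) := Real.Gamma_pos_of_pos (by linarith)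
  have hGα : 0 < Real.Gamma α := Real.Gamma_pos_of_pos (by linarith)
  have h1 : Real.Gamma ((α - 1) / 2) * Real.Gamma ((3 - α) / 2)
      = π / Real.sin (π * ((α - 1) / 2)) := by
    rw [show (3 - α) / 2 = 1 - (α - 1) / 2 by ring]
    exact Real.Gamma_mul_Gamma_one_sub _
  have h2 : Real.Gamma (α - 1) * Real.Gamma (2 - α) = π / Real.sin (π * (α - 1)) := by
    rw [show (2 - α : ℝ) = 1 - (α - 1) by ring]
    exact Real.Gamma_mul_Gamma_one_sub _
  have h3 : Real.Gamma α = (α - 1) * Real.Gamma (α - 1) := by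
    have := Real.Gamma_add_one (show α - 1 ≠ 0 by linarith)
    rw [show α - 1 + 1 = α by ring] at this
    exact this
  have hsin : Real.sin (π * (α - 1))
      = 2 * Real.sin (π * ((α - 1) / 2)) * Real.sin (π * α / 2) := by
    rw [show π * (α - 1) = 2 * (π * ((α - 1) / 2)) by ring, Real.sin_two_mul]
    rw [show π * α / 2 = π * ((α - 1) / 2) + π / 2 by ring, Real.sin_add_pi_div_two]
  have hsin' : 0 < Real.sin (π * (α - 1)) := by rw [hsin]; positivity
  have h2' : Real.Gamma (2 - α)
      = π / (Real.sin (π * (α - 1)) * Real.Gamma (α - 1)) := by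
    rw [eq_div_iff (by positivity)]
    calc Real.Gamma (2 - α) * (Real.sin (π * (α - 1)) * Real.Gamma (α - 1))
        = Real.Gamma (α - 1) * Real.Gamma (2 - α) * Real.sin (π * (α - 1)) := by ring
      _ = π / Real.sin (π * (α - 1)) * Real.sin (π * (α - 1)) := by rw [h2]
      _ = π := div_mul_cancel₀ _ (ne_of_gt hsin')
  have hα1 : (α - 1) ≠ 0 := by linarith
  have key : ∀ (p u v w a : ℝ), u ≠ 0 → v ≠ 0 → w ≠ 0 → a ≠ 0 →
      (p / u) * (1/2) / (a * w) = (p / (2 * u * v * w)) * v / a := by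
    intro p u v w a hu hv hw ha
    field_simp
  rw [show Real.Gamma ((α - 1) / 2) * (1 / 2) * Real.Gamma ((3 - α) / 2)
      = Real.Gamma ((α - 1) / 2) * Real.Gamma ((3 - α) / 2) * (1 / 2) from by ring,
    h1, h2', h3, hsin]
  exact key π _ _ _ _ (ne_of_gt hs1) (ne_of_gt hs2) (ne_of_gt hG1) hα1

theorem stmt_1 (α x : ℝ) (hα : 1 < α) (hα2 : α < 2) :
    (∫ y in Ioi (0:ℝ), (1 - Real.cos (x * y)) / y ^ α)
      = |x| ^ (α - 1) * Real.Gamma (2 - α) * Real.sin (π * α / 2) / (α - 1) := by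
  have hGα : 0 < Real.Gamma α := Real.Gamma_pos_of_pos (by linarith)
  have hI : (∫ y in Ioi (0:ℝ), (1 - Real.cos y) / y ^ α)
      = Real.Gamma (2 - α) * Real.sin (π * α / 2) / (α - 1) := by
    rw [← alg_eval α hα hα2, ← I_eval α hα hα2]
    field_simp
  rcases eq_or_ne x 0 with rfl | hx
  · simp only [zero_mul, Real.cos_zero, sub_self, zero_div, integral_zero, abs_zero]
    rw [Real.zero_rpow (by intro h; apply absurd h; intro h'; linarith [sub_eq_zero.mp h'] : α - 1 ≠ 0)]
    ring
  · have hc : (0:ℝ) < |x| := abs_pos.mpr hx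
    set g : ℝ → ℝ := fun u => (1 - Real.cos u) / u ^ α with hg
    have step1 : (∫ y in Ioi (0:ℝ), (1 - Real.cos (x * y)) / y ^ α)
        = ∫ y in Ioi (0:ℝ), |x| ^ α * g (|x| * y) := by
      refine setIntegral_congr_fun measurableSet_Ioi (fun y hy => ?_)
      have hy : (0:ℝ) < y := hy
      have hcos : Real.cos (x * y) = Real.cos (|x| * y) := by
        rcases abs_choice x with h | h
        · rw [h]
        · rw [h]; simp [Real.cos_neg, neg_mul]
      rw [hcos, hg]
      simp only
      rw [Real.mul_rpow hc.le hy.le]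
      have h1 : (0:ℝ) < |x| ^ α := Real.rpow_pos_of_pos hc _
      have h2 : (0:ℝ) < y ^ α := Real.rpow_pos_of_pos hy _
      field_simp
    rw [step1, integral_const_mul, integral_comp_mul_left_Ioi g 0 hc, mul_zero,
      smul_eq_mul, ← mul_assoc]
    have : |x| ^ α * |x|⁻¹ = |x| ^ (α - 1) := by
      rw [Real.rpow_sub hc, Real.rpow_one, div_eq_mul_inv]
    rw [this, hI]
    ring
end

section
/- For α ∈ (1,2), β ∈ (0, α−1) and constants c₋, c₊ ≥ 0 with c₋+c₊>0, the constant C := (∫₀^∞ E^x(1 − e^{−σ(U_α)}) η(dx))^{−1}, where η(dx) on (0,∞) has density (c₋+c₊)|x|^{−(1+β)} relative to the computation below, evaluates to C = β·sin(π(β+1)/α) / ((c₋+c₊)·Γ(1−β)·cos(πβ/2)·sin(π/α)). Equivalently, (c₋+c₊)/(π u₁(0)) ∫₀^∞ ∫₀^∞ (1−cos(xθ))/(1+θ^α) dθ · x^{−(1+β)} dx = (c₋+c₊)·Γ(1−β)·cos(πβ/2)·sin(π/α)/(β·sin(π(β+1)/α)). -/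
open MeasureTheory Real Set Filter

lemma L1 {c p : ℝ} (hc : -1 < c) (hcp : c - p < -1) :
    IntegrableOn (fun t : ℝ => t ^ c / (1 + t ^ p)) (Ioi 0) := by
  have hp : 0 < p := by linarith
  have hmeas : Measurable (fun t : ℝ => t ^ c / (1 + t ^ p)) := by fun_prop
  have h1 : IntegrableOn (fun t : ℝ => t ^ c / (1 + t ^ p)) (Ioc 0 1) := by
    have hint : IntegrableOn (fun t : ℝ => t ^ c) (Ioc 0 1) := by
      have := intervalIntegral.intervalIntegrable_rpow' (a := 0) (b := 1) hc
      rwa [intervalIntegrable_iff_integrableOn_Ioc_of_le (by norm_num)] at this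
    refine hint.mono' hmeas.aestronglyMeasurable ?_
    filter_upwards [ae_restrict_mem measurableSet_Ioc] with t ht
    have ht0 : 0 < t := ht.1
    have h1p : (1:ℝ) ≤ 1 + t ^ p := by
      have : 0 ≤ t ^ p := rpow_nonneg ht0.le _
      linarith
    rw [norm_div, norm_of_nonneg (rpow_nonneg ht0.le _),
      norm_of_nonneg (by linarith : (0:ℝ) ≤ 1 + t ^ p)]
    calc t ^ c / (1 + t ^ p) ≤ t ^ c / 1 := by
          apply div_le_div_of_nonneg_left (rpow_nonneg ht0.le _) one_pos h1p
      _ = t ^ c := by ring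
  have h2 : IntegrableOn (fun t : ℝ => t ^ c / (1 + t ^ p)) (Ioi 1) := by
    have hint := integrableOn_Ioi_rpow_of_lt hcp one_pos
    refine hint.mono' hmeas.aestronglyMeasurable ?_
    filter_upwards [ae_restrict_mem measurableSet_Ioi] with t ht
    have ht0 : (0:ℝ) < t := lt_trans one_pos ht
    have htp : 0 < t ^ p := rpow_pos_of_pos ht0 _
    rw [norm_div, norm_of_nonneg (rpow_nonneg ht0.le _),
      norm_of_nonneg (by linarith : (0:ℝ) ≤ 1 + t ^ p)]
    calc t ^ c / (1 + t ^ p) ≤ t ^ c / t ^ p := by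
          apply div_le_div_of_nonneg_left (rpow_nonneg ht0.le _) htp (by linarith)
      _ = t ^ (c - p) := by rw [← rpow_sub ht0]
  have : Ioi (0:ℝ) = Ioc 0 1 ∪ Ioi 1 := (Ioc_union_Ioi_eq_Ioi (by norm_num)).symm
  rw [this]
  exact h1.union h2

lemma L2 {β θ : ℝ} (hβ : 0 < β) (hβ1 : β < 1) :
    IntegrableOn (fun x : ℝ => (1 - Real.cos (x * θ)) * x ^ (-1 - β)) (Ioi 0) := by
  have hmeas : Measurable (fun x : ℝ => (1 - Real.cos (x * θ)) * x ^ (-1 - β)) := by fun_prop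
  have h1 : IntegrableOn (fun x : ℝ => (1 - Real.cos (x * θ)) * x ^ (-1 - β)) (Ioc 0 1) := by
    have hint : IntegrableOn (fun x : ℝ => θ^2/2 * x ^ (1 - β)) (Ioc 0 1) := by
      have := intervalIntegral.intervalIntegrable_rpow' (a := 0) (b := 1) (r := 1 - β) (by linarith)
      rw [intervalIntegrable_iff_integrableOn_Ioc_of_le (by norm_num)] at this
      exact this.const_mul _
    refine hint.mono' hmeas.aestronglyMeasurable ?_
    filter_upwards [ae_restrict_mem measurableSet_Ioc] with x hx
    have hx0 : 0 < x := hx.1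
    have hcos : 1 - Real.cos (x * θ) ≤ (x*θ)^2/2 := by
      have := Real.one_sub_sq_div_two_le_cos (x := x*θ)
      linarith
    have hcos0 : 0 ≤ 1 - Real.cos (x * θ) := by
      have := Real.cos_le_one (x*θ); linarith
    rw [norm_mul, norm_of_nonneg hcos0, norm_of_nonneg (rpow_nonneg hx0.le _)]
    calc (1 - Real.cos (x*θ)) * x ^ (-1-β) ≤ (x*θ)^2/2 * x ^ (-1-β) := by
          apply mul_le_mul_of_nonneg_right hcos (rpow_nonneg hx0.le _)
      _ = θ^2/2 * (x^(2:ℝ) * x ^ (-1-β)) := by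
          rw [rpow_two]; ring
      _ = θ^2/2 * x ^ (1 - β) := by
          rw [← rpow_add hx0]; congr 1; ring
  have h2 : IntegrableOn (fun x : ℝ => (1 - Real.cos (x * θ)) * x ^ (-1 - β)) (Ioi 1) := by
    have hint := (integrableOn_Ioi_rpow_of_lt (a := -1-β) (by linarith) one_pos).const_mul 2
    refine hint.mono' hmeas.aestronglyMeasurable ?_
    filter_upwards [ae_restrict_mem measurableSet_Ioi] with x hx
    have hx0 : (0:ℝ) < x := lt_trans one_pos hx
    have hcos0 : 0 ≤ 1 - Real.cos (x * θ) := by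
      have := Real.cos_le_one (x*θ); linarith
    have hcos2 : 1 - Real.cos (x * θ) ≤ 2 := by
      have := Real.neg_one_le_cos (x*θ); linarith
    rw [norm_mul, norm_of_nonneg hcos0, norm_of_nonneg (rpow_nonneg hx0.le _)]
    exact mul_le_mul_of_nonneg_right hcos2 (rpow_nonneg hx0.le _)
  have : Ioi (0:ℝ) = Ioc 0 1 ∪ Ioi 1 := (Ioc_union_Ioi_eq_Ioi (by norm_num)).symm
  rw [this]
  exact h1.union h2

lemma LapOne {t : ℝ} (ht : 0 < t) :
    ∫ u in Ioi (0:ℝ), Real.exp (-(u * t)) = 1 / t := by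
  have := integral_comp_mul_right_Ioi (fun x => Real.exp (-x)) 0 ht
  simp only [zero_mul, smul_eq_mul] at this
  rw [this, integral_exp_neg_Ioi_zero]
  simp [one_div]

lemma LapOneInt {t : ℝ} (ht : 0 < t) :
    IntegrableOn (fun u : ℝ => Real.exp (-(u * t))) (Ioi 0) := by
  have := exp_neg_integrableOn_Ioi 0 ht
  refine this.congr_fun (fun u _ => by ring_nf) measurableSet_Ioi

lemma LapCosInt {t : ℝ} (ht : 0 < t) :
    IntegrableOn (fun u : ℝ => Real.cos u * Real.exp (-(u * t))) (Ioi 0) := by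
  refine (LapOneInt ht).mono' (Measurable.aestronglyMeasurable (by fun_prop)) ?_
  filter_upwards [ae_restrict_mem measurableSet_Ioi] with u _
  rw [norm_mul, norm_of_nonneg (Real.exp_pos _).le]
  calc ‖Real.cos u‖ * Real.exp (-(u*t)) ≤ 1 * Real.exp (-(u*t)) := by
        apply mul_le_mul_of_nonneg_right _ (Real.exp_pos _).le
        rw [Real.norm_eq_abs]; exact Real.abs_cos_le_one u
    _ = Real.exp (-(u*t)) := one_mul _
  
-- ∫_0^∞ cos u * exp(-(u*t)) du = t/(1+t^2)

lemma LapCos {t : ℝ} (ht : 0 < t) :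
    ∫ u in Ioi (0:ℝ), Real.cos u * Real.exp (-(u * t)) = t / (1 + t^2) := by
  have ht2 : (0:ℝ) < 1 + t^2 := by positivity
  set F : ℝ → ℝ := fun u => Real.exp (-(u*t)) * (Real.sin u - t * Real.cos u) / (1 + t^2) with hF
  have hderiv : ∀ u ∈ Ici (0:ℝ), HasDerivAt F (Real.cos u * Real.exp (-(u*t))) u := by
    intro u _
    have h1 : HasDerivAt (fun u : ℝ => -(u*t)) (-t) u := by
      simpa using ((hasDerivAt_id u).mul_const t).fun_neg
    have h2 : HasDerivAt (fun u : ℝ => Real.exp (-(u*t))) (Real.exp (-(u*t)) * (-t)) u :=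
      (Real.hasDerivAt_exp _).comp u h1
    have h3 : HasDerivAt (fun u : ℝ => Real.sin u - t * Real.cos u)
        (Real.cos u + t * Real.sin u) u := by
      simpa [mul_comm] using (Real.hasDerivAt_sin u).fun_sub ((Real.hasDerivAt_cos u).const_mul t)
    have h4 := (h2.fun_mul h3).div_const (1 + t^2)
    refine h4.congr_deriv ?_
    rw [div_eq_iff ht2.ne']
    ring
  have htend : Tendsto F atTop (nhds 0) := by
    have hbound : ∀ u : ℝ, 0 ≤ u → |F u| ≤ (1 + t) / (1 + t^2) * Real.exp (-t*u) := by
      intro u hu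
      rw [hF]
      have : |Real.exp (-(u*t)) * (Real.sin u - t * Real.cos u) / (1 + t^2)|
          = Real.exp (-(u*t)) * |Real.sin u - t * Real.cos u| / (1 + t^2) := by
        rw [abs_div, abs_mul, abs_of_nonneg (Real.exp_pos _).le, abs_of_pos ht2]
      rw [this]
      have hb : |Real.sin u - t * Real.cos u| ≤ 1 + t := by
        calc |Real.sin u - t * Real.cos u| ≤ |Real.sin u| + |t * Real.cos u| := abs_sub _ _
          _ ≤ 1 + t := by
            have h5 : |t * Real.cos u| ≤ t := by
              rw [abs_mul, abs_of_pos ht]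
              nlinarith [Real.abs_cos_le_one u, abs_nonneg (Real.cos u)]
            have := Real.abs_sin_le_one u
            linarith
      have : Real.exp (-(u*t)) = Real.exp (-t*u) := by ring_nf
      rw [this]
      rw [div_le_iff₀ ht2] at *
      calc Real.exp (-t*u) * |Real.sin u - t * Real.cos u|
          ≤ Real.exp (-t*u) * (1+t) := by
            exact mul_le_mul_of_nonneg_left hb (Real.exp_pos _).le
        _ = (1+t)/(1+t^2) * Real.exp (-t*u) * (1+t^2) := by field_simp
    have hexp : Tendsto (fun u : ℝ => (1 + t) / (1 + t^2) * Real.exp (-t*u)) atTop (nhds 0) := by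
      have := Real.tendsto_exp_atBot.comp (tendsto_id.const_mul_atTop_of_neg (by linarith : -t < 0))
      simpa using this.const_mul ((1+t)/(1+t^2))
    have hneg : Tendsto (fun u : ℝ => -((1 + t) / (1 + t^2) * Real.exp (-t*u))) atTop (nhds 0) := by
      simpa using hexp.neg
    refine tendsto_of_tendsto_of_tendsto_of_le_of_le' hneg hexp ?_ ?_
    · filter_upwards [eventually_ge_atTop (0:ℝ)] with u hu
      have := hbound u hu; cases abs_le.mp this; linarith
    · filter_upwards [eventually_ge_atTop (0:ℝ)] with u hu
      have := hbound u hu; cases abs_le.mp this; linarith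
  have := integral_Ioi_of_hasDerivAt_of_tendsto' hderiv (LapCosInt ht) htend
  rw [this, hF]
  simp
  ring

lemma GamScaledInt {s u : ℝ} (hs : 0 < s) (hu : 0 < u) :
    IntegrableOn (fun t : ℝ => t ^ (s - 1) * Real.exp (-(u * t))) (Ioi 0) := by
  have := integrableOn_rpow_mul_exp_neg_mul_rpow (s := s - 1) (p := 1) (b := u)
    (by linarith) one_pos hu
  refine this.congr_fun (fun t ht => ?_) measurableSet_Ioi
  simp only [rpow_one, neg_mul]

lemma Kmain {s : ℝ} (hs0 : 0 < s) (hs1 : s < 1) :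
    ∫ t in Ioi (0:ℝ), t ^ (s - 1) / (1 + t) = π / Real.sin (π * s) := by
  set μ := volume.restrict (Ioi (0:ℝ)) with hμ
  set F : ℝ → ℝ → ℝ := fun t u => t ^ (s-1) * Real.exp (-((1+t)*u)) with hFdef
  have hFm : AEStronglyMeasurable (Function.uncurry F) (μ.prod μ) := by
    apply Measurable.aestronglyMeasurable
    exact (measurable_fst.pow_const _ |>.mono le_rfl le_rfl |>.mono le_rfl le_rfl).mul
      ((((measurable_const.add measurable_fst).mul measurable_snd).neg).exp) |>.mono le_rfl le_rfl
  have hInner : ∀ t : ℝ, t ∈ Ioi (0:ℝ) → ∫ u, F t u ∂μ = t ^ (s-1) / (1 + t) := by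
    intro t ht
    have ht1 : (0:ℝ) < 1 + t := by have := mem_Ioi.mp ht; linarith
    have heq : ∀ u : ℝ, F t u = t ^ (s-1) * Real.exp (-(u * (1+t))) := by
      intro u; rw [hFdef]; ring_nf
    simp_rw [heq]
    rw [MeasureTheory.integral_const_mul, hμ, LapOne ht1]
    ring
  have hInnerInt : ∀ t : ℝ, t ∈ Ioi (0:ℝ) → Integrable (fun u => F t u) μ := by
    intro t ht
    have ht1 : (0:ℝ) < 1 + t := by have := mem_Ioi.mp ht; linarith
    have h2 := (LapOneInt ht1).const_mul (t ^ (s-1))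
    refine h2.congr (Filter.Eventually.of_forall fun u => ?_)
    simp only [hFdef]; ring_nf
  have hFnonneg : ∀ t : ℝ, t ∈ Ioi (0:ℝ) → ∀ u : ℝ, 0 ≤ F t u := fun t ht u =>
    mul_nonneg (rpow_nonneg (le_of_lt (mem_Ioi.mp ht)) _) (Real.exp_pos _).le
  have hFint : Integrable (Function.uncurry F) (μ.prod μ) := by
    rw [integrable_prod_iff hFm]
    constructor
    · filter_upwards [ae_restrict_mem measurableSet_Ioi] with t ht
      exact hInnerInt t ht
    · have hL1 : IntegrableOn (fun t : ℝ => t ^ (s-1) / (1 + t)) (Ioi 0) := by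
        have := L1 (c := s - 1) (p := 1) (by linarith) (by linarith)
        refine this.congr_fun (fun t ht => by simp only [rpow_one]) measurableSet_Ioi
      refine hL1.congr ?_
      filter_upwards [ae_restrict_mem measurableSet_Ioi] with t ht
      rw [← hInner t ht]
      exact (integral_congr_ae (Filter.Eventually.of_forall fun u =>
        (norm_of_nonneg (hFnonneg t ht u)).symm))
  have hswap := integral_integral_swap hFint
  have lhs_eq : ∫ t in Ioi (0:ℝ), t ^ (s - 1) / (1 + t) = ∫ t, ∫ u, F t u ∂μ ∂μ := by
    rw [hμ]
    refine (integral_congr_ae ?_)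
    filter_upwards [ae_restrict_mem measurableSet_Ioi] with t ht
    exact (hInner t ht).symm
  have hOuter : ∀ u : ℝ, u ∈ Ioi (0:ℝ) →
      ∫ t, F t u ∂μ = Real.Gamma s * (Real.exp (-u) * u ^ ((1-s) - 1)) := by
    intro u hu
    have hu0 : (0:ℝ) < u := mem_Ioi.mp hu
    have heq : ∀ t : ℝ, F t u = Real.exp (-u) * (t ^ (s-1) * Real.exp (-(u * t))) := by
      intro t; simp only [hFdef]
      rw [show -((1+t)*u) = -u + -(u*t) by ring, Real.exp_add]
      ring
    simp_rw [heq]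
    rw [MeasureTheory.integral_const_mul, hμ, integral_rpow_mul_exp_neg_mul_Ioi hs0 hu0]
    rw [show (1:ℝ)/u = u⁻¹ by rw [one_div], Real.inv_rpow hu0.le, ← Real.rpow_neg hu0.le]
    rw [show (1-s) - 1 = -s by ring]
    ring
  rw [lhs_eq, hswap]
  have : ∫ u, (∫ t, F t u ∂μ) ∂μ
      = ∫ u in Ioi (0:ℝ), Real.Gamma s * (Real.exp (-u) * u ^ ((1-s) - 1)) := by
    rw [hμ]
    refine integral_congr_ae ?_
    filter_upwards [ae_restrict_mem measurableSet_Ioi] with u hu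
    exact hOuter u hu
  rw [this, MeasureTheory.integral_const_mul, ← Real.Gamma_eq_integral (by linarith : 0 < 1 - s),
    Real.Gamma_mul_Gamma_one_sub]

lemma LapOneSubCos {t : ℝ} (ht : 0 < t) :
    ∫ u in Ioi (0:ℝ), (1 - Real.cos u) * Real.exp (-(u * t)) = 1 / (t * (1 + t^2)) := by
  have h1 : ∀ u : ℝ, (1 - Real.cos u) * Real.exp (-(u * t))
      = Real.exp (-(u * t)) - Real.cos u * Real.exp (-(u * t)) := fun u => by ring
  simp_rw [h1]
  rw [integral_sub (LapOneInt ht) (LapCosInt ht), LapOne ht, LapCos ht]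
  have h2 : (0:ℝ) < 1 + t^2 := by positivity
  field_simp
  ring

lemma LapOneSubCosInt {t : ℝ} (ht : 0 < t) :
    IntegrableOn (fun u : ℝ => (1 - Real.cos u) * Real.exp (-(u * t))) (Ioi 0) := by
  have := (LapOneInt ht).sub (LapCosInt ht)
  refine this.congr (Filter.Eventually.of_forall fun u => by simp only [Pi.sub_apply]; ring)

lemma Kmain2 {β : ℝ} (hβ : 0 < β) (hβ1 : β < 1) :
    ∫ t in Ioi (0:ℝ), t ^ (β - 1) / (1 + t^2) = π / (2 * Real.sin (π * β / 2)) := by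
  have key := integral_comp_rpow_Ioi_of_pos (g := fun y => y ^ (β/2 - 1) / (1 + y))
    (p := 2) two_pos
  have hK := Kmain (s := β/2) (by linarith) (by linarith)
  have lhs_eq : ∫ x in Ioi (0:ℝ), ((2:ℝ) * x ^ ((2:ℝ) - 1)) • ((x ^ (2:ℝ)) ^ (β/2 - 1) / (1 + x ^ (2:ℝ)))
      = ∫ x in Ioi (0:ℝ), 2 * (x ^ (β - 1) / (1 + x^2)) := by
    refine setIntegral_congr_fun measurableSet_Ioi (fun x hx => ?_)
    have hx0 : (0:ℝ) < x := hx
    have e2 : (x ^ (2:ℝ)) ^ (β/2 - 1) = x ^ (β - 2) := by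
      rw [← Real.rpow_mul hx0.le]
      ring_nf
    have e4 : x ^ ((2:ℝ) - 1) = x := by
      rw [show (2:ℝ) - 1 = 1 by norm_num, rpow_one]
    rw [smul_eq_mul, e2, e4, rpow_two]
    have e5 : x * x ^ (β - 2) = x ^ (β - 1) := by
      rw [show x * x ^ (β-2) = x ^ (1:ℝ) * x ^ (β-2) by rw [rpow_one],
        ← Real.rpow_add hx0]
      ring_nf
    rw [← e5]; ring
  rw [lhs_eq] at key
  rw [integral_const_mul] at key
  rw [hK] at key
  have hsin : Real.sin (π * (β/2)) = Real.sin (π * β / 2) := by ring_nf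
  rw [hsin] at key
  have hs0 : Real.sin (π * β / 2) ≠ 0 := by
    have : 0 < Real.sin (π * β / 2) := by
      apply Real.sin_pos_of_pos_of_lt_pi
      · positivity
      · nlinarith [Real.pi_pos]
    linarith
  field_simp at key ⊢
  linarith

lemma AVal {β : ℝ} (hβ : 0 < β) (hβ1 : β < 1) :
    ∫ u in Ioi (0:ℝ), (1 - Real.cos u) * u ^ (-1 - β)
      = π / (2 * Real.Gamma (β + 1) * Real.sin (π * β / 2)) := by
  have hG : 0 < Real.Gamma (β + 1) := Real.Gamma_pos_of_pos (by linarith)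
  set μ := volume.restrict (Ioi (0:ℝ)) with hμ
  set H : ℝ → ℝ → ℝ := fun u t => (1 - Real.cos u) * (t ^ β * Real.exp (-(u * t))) with hHdef
  have hHm : AEStronglyMeasurable (Function.uncurry H) (μ.prod μ) :=
    Measurable.aestronglyMeasurable (by rw [hHdef]; fun_prop)
  -- inner t-integral for u > 0
  have hInner : ∀ u : ℝ, u ∈ Ioi (0:ℝ) →
      ∫ t, H u t ∂μ = (1 - Real.cos u) * (u ^ (-1 - β) * Real.Gamma (β + 1)) := by
    intro u hu
    have hu0 : (0:ℝ) < u := hu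
    have heq : ∀ t : ℝ, H u t = (1 - Real.cos u) * (t ^ ((β + 1) - 1) * Real.exp (-(u * t))) := by
      intro t; simp only [hHdef]; norm_num
    simp_rw [heq]
    rw [MeasureTheory.integral_const_mul, hμ, integral_rpow_mul_exp_neg_mul_Ioi (by linarith) hu0]
    rw [show (1:ℝ)/u = u⁻¹ by rw [one_div], Real.inv_rpow hu0.le, ← Real.rpow_neg hu0.le,
      show -(β + 1) = -1 - β by ring]
  have hInnerInt : ∀ u : ℝ, u ∈ Ioi (0:ℝ) → Integrable (fun t => H u t) μ := by
    intro u hu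
    have hu0 : (0:ℝ) < u := hu
    have h2 := (GamScaledInt (s := β + 1) (by linarith) hu0).const_mul (1 - Real.cos u)
    refine h2.congr (Filter.Eventually.of_forall fun t => ?_)
    simp only [hHdef]; norm_num
  have hHnonneg : ∀ u : ℝ, ∀ t : ℝ, t ∈ Ioi (0:ℝ) → 0 ≤ H u t := by
    intro u t ht
    have h1 : 0 ≤ 1 - Real.cos u := by have := Real.cos_le_one u; linarith
    exact mul_nonneg h1 (mul_nonneg (rpow_nonneg (le_of_lt ht) _) (Real.exp_pos _).le)
  have hHint : Integrable (Function.uncurry H) (μ.prod μ) := by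
    rw [integrable_prod_iff hHm]
    constructor
    · filter_upwards [ae_restrict_mem measurableSet_Ioi] with u hu
      exact hInnerInt u hu
    · have hL2 : Integrable (fun u : ℝ => ((1 - Real.cos u) * u ^ (-1 - β)) * Real.Gamma (β+1)) μ := by
        have h3 := (L2 (θ := 1) hβ hβ1).mul_const (Real.Gamma (β+1))
        refine h3.congr (Filter.Eventually.of_forall fun u => by simp)
      refine hL2.congr ?_
      filter_upwards [ae_restrict_mem measurableSet_Ioi] with u hu
      have this2 : (∫ t, ‖Function.uncurry H (u, t)‖ ∂μ) = ∫ t, H u t ∂μ := by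
        rw [hμ]
        refine integral_congr_ae ?_
        filter_upwards [ae_restrict_mem measurableSet_Ioi] with t ht
        rw [Function.uncurry_apply_pair]
        exact norm_of_nonneg (hHnonneg u t ht)
      rw [this2, hInner u hu]; ring
  have hswap := integral_integral_swap hHint
  -- t-side inner integral
  have hOuter : ∀ t : ℝ, t ∈ Ioi (0:ℝ) →
      ∫ u, H u t ∂μ = t ^ (β - 1) / (1 + t^2) := by
    intro t ht
    have ht0 : (0:ℝ) < t := ht
    have heq : ∀ u : ℝ, H u t = t ^ β * ((1 - Real.cos u) * Real.exp (-(u * t))) := by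
      intro u; simp only [hHdef]; ring
    simp_rw [heq]
    rw [MeasureTheory.integral_const_mul, hμ, LapOneSubCos ht0]
    rw [show t ^ β * (1 / (t * (1 + t^2))) = (t ^ β / t ^ (1:ℝ)) / (1 + t^2) by
      rw [rpow_one]; field_simp]
    rw [← Real.rpow_sub ht0]
  have lhs_eq : Real.Gamma (β+1) * ∫ u in Ioi (0:ℝ), (1 - Real.cos u) * u ^ (-1 - β)
      = ∫ u, ∫ t, H u t ∂μ ∂μ := by
    rw [hμ, ← MeasureTheory.integral_const_mul]
    refine integral_congr_ae ?_
    filter_upwards [ae_restrict_mem measurableSet_Ioi] with u hu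
    rw [hInner u hu]; ring
  have rhs_eq : ∫ t, ∫ u, H u t ∂μ ∂μ = π / (2 * Real.sin (π * β / 2)) := by
    rw [hμ, ← Kmain2 hβ hβ1]
    refine integral_congr_ae ?_
    filter_upwards [ae_restrict_mem measurableSet_Ioi] with t ht
    exact hOuter t ht
  have key : Real.Gamma (β+1) * ∫ u in Ioi (0:ℝ), (1 - Real.cos u) * u ^ (-1 - β)
      = π / (2 * Real.sin (π * β / 2)) := by rw [lhs_eq, hswap, rhs_eq]
  have hs0 : Real.sin (π * β / 2) ≠ 0 := by
    have : 0 < Real.sin (π * β / 2) := by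
      apply Real.sin_pos_of_pos_of_lt_pi
      · positivity
      · nlinarith [Real.pi_pos]
    linarith
  field_simp at key ⊢
  linarith

lemma ScaleVal {β θ : ℝ} (hθ : 0 < θ) :
    ∫ x in Ioi (0:ℝ), (1 - Real.cos (x * θ)) * x ^ (-1 - β)
      = θ ^ β * ∫ u in Ioi (0:ℝ), (1 - Real.cos u) * u ^ (-1 - β) := by
  set g : ℝ → ℝ := fun y => (1 - Real.cos y) * y ^ (-1 - β) with hg
  have key := integral_comp_mul_right_Ioi g 0 hθ
  simp only [zero_mul, smul_eq_mul] at key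
  have lhs_eq : ∫ x in Ioi (0:ℝ), (1 - Real.cos (x * θ)) * x ^ (-1 - β)
      = θ ^ (1 + β) * ∫ x in Ioi (0:ℝ), g (x * θ) := by
    rw [← MeasureTheory.integral_const_mul]
    refine setIntegral_congr_fun measurableSet_Ioi (fun x hx => ?_)
    have hx0 : (0:ℝ) < x := hx
    simp only [hg]
    rw [Real.mul_rpow hx0.le hθ.le]
    rw [show θ ^ (1+β) * ((1 - Real.cos (x*θ)) * (x ^ (-1-β) * θ ^ (-1-β)))
      = (θ ^ (1+β) * θ ^ (-1-β)) * ((1 - Real.cos (x*θ)) * x ^ (-1-β)) by ring]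
    rw [← Real.rpow_add hθ]
    norm_num
  rw [lhs_eq, key, ← mul_assoc, ← Real.rpow_neg_one θ, ← Real.rpow_add hθ]
  rw [show (1 + β) + (-1) = β by ring]

lemma BVal {α β : ℝ} (hα : 1 < α) (hβ : 0 < β) (hβα : β < α - 1) :
    ∫ θ in Ioi (0:ℝ), θ ^ β / (1 + θ ^ α) = π / (α * Real.sin (π * (β + 1) / α)) := by
  have hα0 : (0:ℝ) < α := by linarith
  have key := integral_comp_rpow_Ioi_of_pos (g := fun y => y ^ ((β+1)/α - 1) / (1 + y)) hα0
  have hK := Kmain (s := (β+1)/α) (by positivity) (by rw [div_lt_one hα0]; linarith)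
  have lhs_eq : ∫ x in Ioi (0:ℝ), (α * x ^ (α - 1)) • ((x ^ α) ^ ((β+1)/α - 1) / (1 + x ^ α))
      = ∫ x in Ioi (0:ℝ), α * (x ^ β / (1 + x ^ α)) := by
    refine setIntegral_congr_fun measurableSet_Ioi (fun x hx => ?_)
    have hx0 : (0:ℝ) < x := hx
    have e2 : (x ^ α) ^ ((β+1)/α - 1) = x ^ (β + 1 - α) := by
      rw [← Real.rpow_mul hx0.le]
      congr 1
      field_simp
    have e5 : x ^ (α - 1) * x ^ (β + 1 - α) = x ^ β := by
      rw [← Real.rpow_add hx0]; congr 1; ring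
    rw [smul_eq_mul, e2, mul_assoc, mul_div_assoc', e5]
  rw [lhs_eq] at key
  rw [integral_const_mul, hK] at key
  have hsin : Real.sin (π * ((β+1)/α)) = Real.sin (π * (β+1) / α) := by ring_nf
  rw [hsin] at key
  have hs0 : Real.sin (π * (β+1) / α) ≠ 0 := by
    have : 0 < Real.sin (π * (β+1) / α) := by
      apply Real.sin_pos_of_pos_of_lt_pi
      · positivity
      · rw [div_lt_iff₀ hα0]
        have : π * (β + 1) < π * α := by nlinarith [Real.pi_pos]
        linarith
    linarith
  have hα' : α ≠ 0 := ne_of_gt hα0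
  field_simp at key ⊢
  linarith

/-- Evaluation of the normalizing constant `C` for the skew stable Lévy process:
`(c₋+c₊)/(π u₁(0)) ∫₀^∞ ∫₀^∞ (1−cos(xθ))/(1+θ^α) dθ · x^{-(1+β)} dx
  = (c₋+c₊) Γ(1−β) cos(πβ/2) sin(π/α)/(β sin(π(β+1)/α))`,
where `1/(π u₁(0)) = α sin(π/α)/π`; equivalently
`C = β sin(π(β+1)/α)/((c₋+c₊) Γ(1−β) cos(πβ/2) sin(π/α))`. -/
theorem stmt_12 (α β cm cp : ℝ) (hα : 1 < α) (hα2 : α < 2)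
    (hβ : 0 < β) (hβα : β < α - 1) (hcm : 0 ≤ cm) (hcp : 0 ≤ cp) (hc : 0 < cm + cp) :
    (cm + cp) * (α * Real.sin (π / α) / π)
        * (∫ x in Ioi (0:ℝ),
            (∫ θ in Ioi (0:ℝ), (1 - Real.cos (x * θ)) / (1 + θ ^ α)) * x ^ (-(1 + β)))
      = (cm + cp) * Real.Gamma (1 - β) * Real.cos (π * β / 2) * Real.sin (π / α)
          / (β * Real.sin (π * (β + 1) / α)) ∧
    ((cm + cp) * (α * Real.sin (π / α) / π)
        * (∫ x in Ioi (0:ℝ),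
            (∫ θ in Ioi (0:ℝ), (1 - Real.cos (x * θ)) / (1 + θ ^ α)) * x ^ (-(1 + β))))⁻¹
      = β * Real.sin (π * (β + 1) / α)
          / ((cm + cp) * Real.Gamma (1 - β) * Real.cos (π * β / 2) * Real.sin (π / α)) := by
  have hβ1 : β < 1 := by linarith
  have hα0 : (0:ℝ) < α := by linarith
  set μ := volume.restrict (Ioi (0:ℝ)) with hμ
  set A : ℝ := ∫ u in Ioi (0:ℝ), (1 - Real.cos u) * u ^ (-1 - β) with hAdef
  have hA : A = π / (2 * Real.Gamma (β + 1) * Real.sin (π * β / 2)) := AVal hβ hβ1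
  set F : ℝ → ℝ → ℝ := fun x θ => (1 - Real.cos (x * θ)) / (1 + θ ^ α) * x ^ (-1 - β) with hFdef
  have hFm : AEStronglyMeasurable (Function.uncurry F) (μ.prod μ) :=
    Measurable.aestronglyMeasurable (by rw [hFdef]; fun_prop)
  have hθden : ∀ θ : ℝ, θ ∈ Ioi (0:ℝ) → (0:ℝ) < 1 + θ ^ α := fun θ hθ => by
    have : (0:ℝ) ≤ θ ^ α := rpow_nonneg (le_of_lt hθ) _
    linarith
  have hInnerInt : ∀ θ : ℝ, θ ∈ Ioi (0:ℝ) → Integrable (fun x => F x θ) μ := by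
    intro θ hθ
    have h2 := (L2 (θ := θ) hβ hβ1).mul_const (1 / (1 + θ ^ α))
    refine h2.congr (Filter.Eventually.of_forall fun x => by simp only [hFdef]; ring)
  have hInnerVal : ∀ θ : ℝ, θ ∈ Ioi (0:ℝ) →
      ∫ x, F x θ ∂μ = θ ^ β / (1 + θ ^ α) * A := by
    intro θ hθ
    have heq : ∀ x : ℝ, F x θ = ((1 - Real.cos (x * θ)) * x ^ (-1 - β)) * (1 / (1 + θ ^ α)) := by
      intro x; simp only [hFdef]; ring
    simp_rw [heq]
    rw [MeasureTheory.integral_mul_const, hμ, ScaleVal hθ, ← hAdef]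
    ring
  have hFnonneg : ∀ x : ℝ, x ∈ Ioi (0:ℝ) → ∀ θ : ℝ, θ ∈ Ioi (0:ℝ) → 0 ≤ F x θ := by
    intro x hx θ hθ
    have h1 : 0 ≤ 1 - Real.cos (x * θ) := by have := Real.cos_le_one (x*θ); linarith
    have h2 := hθden θ hθ
    have : (0:ℝ) < x := hx
    positivity
  have hFint : Integrable (Function.uncurry F) (μ.prod μ) := by
    rw [integrable_prod_iff' hFm]
    constructor
    · filter_upwards [ae_restrict_mem measurableSet_Ioi] with θ hθ
      exact hInnerInt θ hθ
    · have hL : Integrable (fun θ : ℝ => θ ^ β / (1 + θ ^ α) * A) μ :=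
        (L1 (by linarith) (by linarith)).mul_const A
      refine hL.congr ?_
      filter_upwards [ae_restrict_mem measurableSet_Ioi] with θ hθ
      have : (∫ x, ‖Function.uncurry F (x, θ)‖ ∂μ) = ∫ x, F x θ ∂μ := by
        rw [hμ]
        refine integral_congr_ae ?_
        filter_upwards [ae_restrict_mem measurableSet_Ioi] with x hx
        rw [Function.uncurry_apply_pair]
        exact norm_of_nonneg (hFnonneg x hx θ hθ)
      rw [← hInnerVal θ hθ, ← this]
  have hswap := integral_integral_swap hFint
  have hI : (∫ x in Ioi (0:ℝ),
      (∫ θ in Ioi (0:ℝ), (1 - Real.cos (x * θ)) / (1 + θ ^ α)) * x ^ (-1 - β))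
      = A * (π / (α * Real.sin (π * (β + 1) / α))) := by
    have step1 : (∫ x in Ioi (0:ℝ),
        (∫ θ in Ioi (0:ℝ), (1 - Real.cos (x * θ)) / (1 + θ ^ α)) * x ^ (-1 - β))
        = ∫ x, ∫ θ, F x θ ∂μ ∂μ := by
      rw [hμ]
      refine integral_congr_ae (Filter.Eventually.of_forall fun x => ?_)
      simp only [hFdef]
      rw [MeasureTheory.integral_mul_const]
    have step2 : ∫ θ, ∫ x, F x θ ∂μ ∂μ = A * (π / (α * Real.sin (π * (β + 1) / α))) := by
      have : ∫ θ, ∫ x, F x θ ∂μ ∂μ = ∫ θ in Ioi (0:ℝ), θ ^ β / (1 + θ ^ α) * A := by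
        rw [hμ]
        refine integral_congr_ae ?_
        filter_upwards [ae_restrict_mem measurableSet_Ioi] with θ hθ
        exact hInnerVal θ hθ
      rw [this, MeasureTheory.integral_mul_const, BVal hα hβ hβα]
      ring
    rw [step1, hswap, step2]
  -- arithmetic
  have hG1 : 0 < Real.Gamma (β + 1) := Real.Gamma_pos_of_pos (by linarith)
  have hs1 : 0 < Real.sin (π * β / 2) := by
    apply Real.sin_pos_of_pos_of_lt_pi
    · positivity
    · nlinarith [Real.pi_pos]
  have hc1 : 0 < Real.cos (π * β / 2) := by
    apply Real.cos_pos_of_mem_Ioo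
    constructor
    · nlinarith [Real.pi_pos]
    · nlinarith [Real.pi_pos]
  have hs2 : 0 < Real.sin (π * (β + 1) / α) := by
    apply Real.sin_pos_of_pos_of_lt_pi
    · positivity
    · rw [div_lt_iff₀ hα0]
      nlinarith [Real.pi_pos]
  have hGG : π * β = 2 * Real.Gamma (β + 1) * Real.Gamma (1 - β)
      * Real.sin (π * β / 2) * Real.cos (π * β / 2) := by
    have h1 := Real.Gamma_mul_Gamma_one_sub β
    have h2 : Real.Gamma (β + 1) = β * Real.Gamma β := Real.Gamma_add_one hβ.ne'
    have h3 : Real.sin (π * β) = 2 * Real.sin (π * β / 2) * Real.cos (π * β / 2) := by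
      have h4 := Real.sin_two_mul (π * β / 2)
      rw [show 2 * (π * β / 2) = π * β by ring] at h4
      linarith
    have hsπβ : Real.sin (π * β) ≠ 0 := by rw [h3]; positivity
    have h1' : Real.Gamma β * Real.Gamma (1 - β) * Real.sin (π * β) = π := by
      rw [h1, div_mul_cancel₀ _ hsπβ]
    rw [h2]
    linear_combination (-β) * h1' + β * (Real.Gamma β * Real.Gamma (1 - β)) * h3
  have hA2 : A = Real.Gamma (1 - β) * Real.cos (π * β / 2) / β := by
    rw [hA, div_eq_div_iff (by positivity) hβ.ne']
    linear_combination hGG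
  have key : (cm + cp) * (α * Real.sin (π / α) / π)
      * (∫ x in Ioi (0:ℝ),
          (∫ θ in Ioi (0:ℝ), (1 - Real.cos (x * θ)) / (1 + θ ^ α)) * x ^ (-(1 + β)))
      = (cm + cp) * Real.Gamma (1 - β) * Real.cos (π * β / 2) * Real.sin (π / α)
          / (β * Real.sin (π * (β + 1) / α)) := by
    rw [show -(1 + β) = -1 - β by ring, hI, hA2]
    have hπ : (π:ℝ) ≠ 0 := Real.pi_ne_zero
    field_simp
  refine ⟨key, ?_⟩
  rw [key, inv_div]
end

section
/- Let α ∈ (1,2) and let ζ be a real random variable with E|ζ|^{α−1} < ∞ (in particular this holds if E|ζ| < ∞, or if P(|ζ|>x) is regularly varying of index −β with β > α−1). Let a : ℝ → [0,∞) be measurable with a(x) ≥ K|x|^{α−1} for |x| < δ₀ and some K > 0, δ₀ > 0, and a bounded. Then for every δ > 0, (∫_{|x|≥δ} a(x) P_{ζ/n}(dx)) / (∫_{|x|<δ} a(x) P_{ζ/n}(dx)) → 0 as n → ∞, where P_{ζ/n} denotes the law of ζ/n. -/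
open MeasureTheory Real Set Filter Topology

theorem stmt_16 {Ω : Type*} [MeasurableSpace Ω] (P : Measure Ω) [IsProbabilityMeasure P]
    (α : ℝ) (hα : 1 < α) (hα2 : α < 2)
    (ζ : Ω → ℝ) (hζ : Measurable ζ)
    (hmom : Integrable (fun ω => |ζ ω| ^ (α - 1)) P)
    (a : ℝ → ℝ) (ha : Measurable a) (ha0 : ∀ x, 0 ≤ a x)
    (habd : ∃ M, ∀ x, a x ≤ M)
    (K δ₀ : ℝ) (hK : 0 < K) (hδ₀ : 0 < δ₀)
    (halow : ∀ x : ℝ, |x| < δ₀ → K * |x| ^ (α - 1) ≤ a x) :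
    ∀ δ : ℝ, 0 < δ →
      Tendsto
        (fun n : ℕ =>
          (∫ x in {x : ℝ | δ ≤ |x|}, a x ∂(P.map (fun ω => ζ ω / n)))
            / (∫ x in {x : ℝ | |x| < δ}, a x ∂(P.map (fun ω => ζ ω / n))))
        atTop (nhds 0) := by
  obtain ⟨M, hM⟩ := habd
  have hM0 : 0 ≤ M := le_trans (ha0 0) (hM 0)
  set β := α - 1 with hβdef
  have hβ : 0 < β := by simp only [hβdef]; linarith
  intro δ hδ
  set δ' := min δ δ₀ with hδ'def
  have hδ'pos : 0 < δ' := lt_min hδ hδ₀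
  set h : Ω → ℝ := fun ω => |ζ ω| ^ β with hhdef
  have hh_nonneg : ∀ ω, 0 ≤ h ω := fun ω => rpow_nonneg (abs_nonneg _) β
  have hh_meas : Measurable h := ((Real.continuous_rpow_const hβ.le).measurable).comp hζ.abs
  set c := ∫ ω, h ω ∂P with hcdef
  -- measurability of sets
  have hsδ : MeasurableSet {x : ℝ | δ ≤ |x|} := measurableSet_le measurable_const measurable_abs
  have hsδ' : MeasurableSet {x : ℝ | |x| < δ} :=
    measurableSet_lt measurable_abs measurable_const
  have hζn_meas : ∀ n : ℕ, Measurable (fun ω => ζ ω / (n : ℝ)) := fun n =>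
    hζ.div_const _
  have ha_int : ∀ n : ℕ, Integrable (fun ω => a (ζ ω / n)) P := by
    intro n
    refine Integrable.mono' (integrable_const M) ((ha.comp (hζn_meas n)).aestronglyMeasurable) ?_
    filter_upwards with ω
    rw [Real.norm_eq_abs, abs_of_nonneg (ha0 _)]
    exact hM _
  have hNpre : ∀ n : ℕ, 1 ≤ n →
      (∫ x in {x : ℝ | δ ≤ |x|}, a x ∂(P.map (fun ω => ζ ω / n)))
        = ∫ ω in {ω | (n : ℝ) * δ ≤ |ζ ω|}, a (ζ ω / n) ∂P := by
    intro n hn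
    have hn0 : (0:ℝ) < n := by exact_mod_cast hn
    rw [setIntegral_map hsδ ha.aestronglyMeasurable (hζn_meas n).aemeasurable]
    have hset : (fun ω => ζ ω / (n:ℝ)) ⁻¹' {x | δ ≤ |x|} = {ω | (n:ℝ) * δ ≤ |ζ ω|} := by
      ext ω
      simp only [mem_preimage, mem_setOf_eq]
      rw [abs_div, Nat.abs_cast, le_div_iff₀ hn0, mul_comm]
    rw [hset]
  have hDpre : ∀ n : ℕ, 1 ≤ n →
      (∫ x in {x : ℝ | |x| < δ}, a x ∂(P.map (fun ω => ζ ω / n)))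
        = ∫ ω in {ω | |ζ ω| < (n : ℝ) * δ}, a (ζ ω / n) ∂P := by
    intro n hn
    have hn0 : (0:ℝ) < n := by exact_mod_cast hn
    rw [setIntegral_map hsδ' ha.aestronglyMeasurable (hζn_meas n).aemeasurable]
    have hset : (fun ω => ζ ω / (n:ℝ)) ⁻¹' {x | |x| < δ} = {ω | |ζ ω| < (n:ℝ) * δ} := by
      ext ω
      simp only [mem_preimage, mem_setOf_eq]
      rw [abs_div, Nat.abs_cast, div_lt_iff₀ hn0, mul_comm]
    rw [hset]
  by_cases hc : c = 0
  · -- degenerate case: ζ = 0 a.e., numerator vanishes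
    have hae : ∀ᵐ ω ∂P, h ω = 0 := by
      have := (integral_eq_zero_iff_of_nonneg hh_nonneg hmom).mp hc
      filter_upwards [this.le] with ω hω using le_antisymm hω (hh_nonneg ω)
    have hζ0 : ∀ᵐ ω ∂P, ζ ω = 0 := by
      filter_upwards [hae] with ω hω
      have := rpow_eq_zero_iff_of_nonneg (abs_nonneg (ζ ω)) |>.mp hω
      exact abs_eq_zero.mp this.1
    have hnull : P {ω | ζ ω ≠ 0} = 0 := ae_iff.mp hζ0
    have hnum : ∀ n : ℕ,
        (∫ x in {x : ℝ | δ ≤ |x|}, a x ∂(P.map (fun ω => ζ ω / n))) = 0 := by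
      intro n
      rw [setIntegral_map hsδ ha.aestronglyMeasurable (hζn_meas n).aemeasurable]
      have hsub : (fun ω => ζ ω / (n:ℝ)) ⁻¹' {x | δ ≤ |x|} ⊆ {ω | ζ ω ≠ 0} := by
        intro ω hω
        simp only [mem_preimage, mem_setOf_eq] at hω ⊢
        intro h0
        rw [h0] at hω
        simp at hω
        linarith
      rw [Measure.restrict_eq_zero.mpr (measure_mono_null hsub hnull), integral_zero_measure]
    simp only [hnum, zero_div]
    exact tendsto_const_nhds
  · have hcpos : 0 < c := lt_of_le_of_ne (integral_nonneg hh_nonneg) (Ne.symm hc)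
    -- key convergence of truncated moments
    have key : ∀ r : ℝ, 0 < r →
        Tendsto (fun n : ℕ => ∫ ω in {ω | |ζ ω| < (n : ℝ) * r}, h ω ∂P) atTop (𝓝 c) := by
      intro r hr
      have hsm : ∀ n : ℕ, MeasurableSet {ω | |ζ ω| < (n : ℝ) * r} := fun n =>
        measurableSet_lt hζ.abs measurable_const
      have hmono : Monotone fun n : ℕ => {ω | |ζ ω| < (n : ℝ) * r} := by
        intro m n hmn ω hω
        simp only [mem_setOf_eq] at hω ⊢
        have : (m : ℝ) * r ≤ (n : ℝ) * r := by
          have : (m:ℝ) ≤ n := by exact_mod_cast hmn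
          nlinarith
        linarith
      have hunion : (⋃ n : ℕ, {ω | |ζ ω| < (n : ℝ) * r}) = univ := by
        ext ω
        simp only [mem_iUnion, mem_setOf_eq, mem_univ, iff_true]
        obtain ⟨n, hn⟩ := exists_nat_gt (|ζ ω| / r)
        exact ⟨n, by rwa [div_lt_iff₀ hr] at hn⟩
      have := tendsto_setIntegral_of_monotone hsm hmono (by rw [hunion]; exact hmom.integrableOn)
      rwa [hunion, Measure.restrict_univ] at this
    set F : ℕ → ℝ := fun n => ∫ ω in {ω | (n : ℝ) * δ ≤ |ζ ω|}, h ω ∂P with hFdef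
    set G : ℕ → ℝ := fun n => ∫ ω in {ω | |ζ ω| < (n : ℝ) * δ'}, h ω ∂P with hGdef
    have hG : Tendsto G atTop (𝓝 c) := key δ' hδ'pos
    have hF : Tendsto F atTop (𝓝 0) := by
      have hsplit : ∀ n : ℕ, F n = c - ∫ ω in {ω | |ζ ω| < (n : ℝ) * δ}, h ω ∂P := by
        intro n
        have hseq : {ω | (n : ℝ) * δ ≤ |ζ ω|} = {ω | |ζ ω| < (n : ℝ) * δ}ᶜ := by
          ext ω; simp [not_lt]
        have := integral_add_compl (s := {ω | |ζ ω| < (n : ℝ) * δ})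
          (measurableSet_lt hζ.abs measurable_const) hmom
        simp only [hFdef, hseq]
        linarith [this]
      have : Tendsto (fun n : ℕ => c - ∫ ω in {ω | |ζ ω| < (n : ℝ) * δ}, h ω ∂P)
          atTop (𝓝 (c - c)) := tendsto_const_nhds.sub (key δ hδ)
      rw [sub_self] at this
      exact this.congr (fun n => (hsplit n).symm)
    have hF_nonneg : ∀ n, 0 ≤ F n := fun n =>
      setIntegral_nonneg (measurableSet_le measurable_const hζ.abs) (fun ω _ => hh_nonneg ω)
    -- the dominating sequence
    set B : ℕ → ℝ := fun n => (M * F n) / (δ ^ β * K * G n) with hBdef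
    have hB : Tendsto B atTop (𝓝 0) := by
      have hd : Tendsto (fun n => δ ^ β * K * G n) atTop (𝓝 (δ ^ β * K * c)) :=
        hG.const_mul _
      have hn : Tendsto (fun n => M * F n) atTop (𝓝 (M * 0)) := hF.const_mul _
      have hne : δ ^ β * K * c ≠ 0 := by positivity
      have := hn.div hd hne
      simp only [mul_zero, zero_div] at this
      exact this
    apply tendsto_of_tendsto_of_tendsto_of_le_of_le' tendsto_const_nhds hB
    · filter_upwards with n
      apply div_nonneg
      · exact setIntegral_nonneg hsδ (fun x _ => ha0 x)
      · exact setIntegral_nonneg hsδ' (fun x _ => ha0 x)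
    · have hGev : ∀ᶠ n in atTop, 0 < G n := hG.eventually (eventually_gt_nhds hcpos)
      filter_upwards [hGev, eventually_ge_atTop 1] with n hGn hn1
      have hn0 : (0:ℝ) < n := by exact_mod_cast hn1
      have hnβ : (0:ℝ) < (n : ℝ) ^ β := rpow_pos_of_pos hn0 β
      have hsmF : MeasurableSet {ω | (n : ℝ) * δ ≤ |ζ ω|} :=
        measurableSet_le measurable_const hζ.abs
      have hsmG : MeasurableSet {ω | |ζ ω| < (n : ℝ) * δ'} :=
        measurableSet_lt hζ.abs measurable_const
      -- numerator bound
      have hNbd : (∫ x in {x : ℝ | δ ≤ |x|}, a x ∂(P.map (fun ω => ζ ω / n)))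
          ≤ M * F n / (δ ^ β * (n : ℝ) ^ β) := by
        rw [hNpre n hn1]
        have step1 : ∫ ω in {ω | (n : ℝ) * δ ≤ |ζ ω|}, a (ζ ω / n) ∂P
            ≤ ∫ ω in {ω | (n : ℝ) * δ ≤ |ζ ω|}, M ∂P := by
          apply setIntegral_mono_on (ha_int n).integrableOn (integrableOn_const (measure_ne_top _ _)) hsmF
          intro ω _
          exact hM _
        have step2 : ((n : ℝ) * δ) ^ β * (P {ω | (n : ℝ) * δ ≤ |ζ ω|}).toReal ≤ F n := by
          have : ∫ ω in {ω | (n : ℝ) * δ ≤ |ζ ω|}, ((n : ℝ) * δ) ^ β ∂P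
              ≤ ∫ ω in {ω | (n : ℝ) * δ ≤ |ζ ω|}, h ω ∂P := by
            apply setIntegral_mono_on (integrableOn_const (measure_ne_top _ _))
              hmom.integrableOn hsmF
            intro ω hω
            simp only [mem_setOf_eq] at hω
            exact rpow_le_rpow (by positivity) hω hβ.le
          rwa [setIntegral_const, smul_eq_mul, mul_comm] at this
        rw [setIntegral_const, smul_eq_mul] at step1
        have hmeas_le : (P {ω | (n : ℝ) * δ ≤ |ζ ω|}).toReal ≤ F n / (δ ^ β * (n : ℝ) ^ β) := by
          rw [le_div_iff₀ (by positivity)]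
          calc (P {ω | (n : ℝ) * δ ≤ |ζ ω|}).toReal * (δ ^ β * (n : ℝ) ^ β)
              = ((n : ℝ) * δ) ^ β * (P {ω | (n : ℝ) * δ ≤ |ζ ω|}).toReal := by
                rw [mul_rpow (by positivity) (by positivity)]; ring
            _ ≤ F n := step2
        calc ∫ ω in {ω | (n : ℝ) * δ ≤ |ζ ω|}, a (ζ ω / n) ∂P
            ≤ (P {ω | (n : ℝ) * δ ≤ |ζ ω|}).toReal * M := step1
          _ ≤ F n / (δ ^ β * (n : ℝ) ^ β) * M := by
              apply mul_le_mul_of_nonneg_right hmeas_le hM0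
          _ = M * F n / (δ ^ β * (n : ℝ) ^ β) := by ring
      -- denominator bound
      have hDbd : K / (n : ℝ) ^ β * G n
          ≤ (∫ x in {x : ℝ | |x| < δ}, a x ∂(P.map (fun ω => ζ ω / n))) := by
        rw [hDpre n hn1]
        have hsub : {ω | |ζ ω| < (n : ℝ) * δ'} ⊆ {ω | |ζ ω| < (n : ℝ) * δ} := by
          intro ω hω
          simp only [mem_setOf_eq] at hω ⊢
          have : (n : ℝ) * δ' ≤ (n : ℝ) * δ :=
            mul_le_mul_of_nonneg_left (min_le_left _ _) hn0.le
          linarith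
        have step0 : ∫ ω in {ω | |ζ ω| < (n : ℝ) * δ'}, a (ζ ω / n) ∂P
            ≤ ∫ ω in {ω | |ζ ω| < (n : ℝ) * δ}, a (ζ ω / n) ∂P := by
          apply setIntegral_mono_set (ha_int n).integrableOn
          · filter_upwards with ω using ha0 _
          · exact HasSubset.Subset.eventuallyLE hsub
        have step1 : ∫ ω in {ω | |ζ ω| < (n : ℝ) * δ'}, K / (n : ℝ) ^ β * h ω ∂P
            ≤ ∫ ω in {ω | |ζ ω| < (n : ℝ) * δ'}, a (ζ ω / n) ∂P := by
          apply setIntegral_mono_on ((hmom.const_mul _).integrableOn) (ha_int n).integrableOn hsmG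
          intro ω hω
          simp only [mem_setOf_eq] at hω
          have habs : |ζ ω / (n : ℝ)| = |ζ ω| / n := by
            rw [abs_div, Nat.abs_cast]
          have hlt : |ζ ω / (n : ℝ)| < δ₀ := by
            rw [habs, div_lt_iff₀ hn0]
            calc |ζ ω| < (n : ℝ) * δ' := hω
              _ ≤ (n : ℝ) * δ₀ := mul_le_mul_of_nonneg_left (min_le_right _ _) hn0.le
              _ = δ₀ * n := by ring
          have := halow _ hlt
          calc K / (n : ℝ) ^ β * h ω = K * |ζ ω / (n : ℝ)| ^ β := by
                rw [habs, div_rpow (abs_nonneg _) hn0.le]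
                field_simp
                rfl
            _ ≤ a (ζ ω / n) := this
        have heq : ∫ ω in {ω | |ζ ω| < (n : ℝ) * δ'}, K / (n : ℝ) ^ β * h ω ∂P
            = K / (n : ℝ) ^ β * G n := by
          rw [hGdef]
          exact integral_const_mul _ _
        linarith [step0, step1, heq ▸ step1]
      have hD'pos : 0 < K / (n : ℝ) ^ β * G n := by positivity
      have hNnonneg : 0 ≤ M * F n / (δ ^ β * (n : ℝ) ^ β) := by positivity
      calc (∫ x in {x : ℝ | δ ≤ |x|}, a x ∂(P.map (fun ω => ζ ω / n)))
            / (∫ x in {x : ℝ | |x| < δ}, a x ∂(P.map (fun ω => ζ ω / n)))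
          ≤ (M * F n / (δ ^ β * (n : ℝ) ^ β)) / (K / (n : ℝ) ^ β * G n) :=
            div_le_div₀ hNnonneg hNbd hD'pos hDbd
        _ = B n := by
            rw [hBdef]
            field_simp
end
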